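/- If H is a weakly nilpotent hypergroup and T is a closed subset of H, then the quotient hypergroup H//T is weakly nilpotent. -/

import Mathlib

/-- A hypergroup: a set with a hypermultiplication, identity and involution
satisfying (H1), (H2), (H3). -/
structure Hypergroup (H : Type*) where
  hmul : H → H → Set H
  one : H
  star : H → H
  assoc : ∀ p q r : H, (⋃ x ∈ hmul q r, hmul p x) = ⋃ x ∈ hmul p q, hmul x r
  hmul_one : ∀ s : H, hmul s one = {s}
  inv_left : ∀ p q r : H, r ∈ hmul p q → q ∈ hmul (star p) r
  inv_right : ∀ p q r : H, r ∈ hmul p q → p ∈ hmul r (star q)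

namespace Hypergroup

variable {H : Type*} (G : Hypergroup H)

/-- Complex (set) product: `AB = ⋃_{a ∈ A, b ∈ B} ab`. -/
def smul (A B : Set H) : Set H := ⋃ a ∈ A, ⋃ b ∈ B, G.hmul a b

/-- `A* = { a* | a ∈ A }`. -/
def sstar (A : Set H) : Set H := G.star '' A

/-- A nonempty subset `F` is closed if `F*F ⊆ F`. -/
def IsClosed (F : Set H) : Prop := F.Nonempty ∧ G.smul (G.sstar F) F ⊆ F

/-- `F` is normal in `K`: `Fk ⊆ kF` for all `k ∈ K`. -/
def IsNormalIn (F K : Set H) : Prop := ∀ k ∈ K, G.smul F {k} ⊆ G.smul {k} F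

/-- `F` is strongly normal in `K`: `k*Fk ⊆ F` for all `k ∈ K`. -/
def IsStronglyNormalIn (F K : Set H) : Prop :=
  ∀ k ∈ K, G.smul (G.smul {G.star k} F) {k} ⊆ F

/-- An element `s` is thin if `s*s = {1}`. -/
def IsThinElem (s : H) : Prop := G.hmul (G.star s) s = {G.one}

/-- A hypergroup is thin if all elements are thin. -/
def IsThin : Prop := ∀ s : H, G.IsThinElem s

/-- The center `Z(H) = {h | hx = xh for all x, h*h = {1}}`. -/
def center : Set H :=
  {h | (∀ x : H, G.hmul h x = G.hmul x h) ∧ G.hmul (G.star h) h = {G.one}}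

/-- The class `h^F := FhF`. -/
def cls (F : Set H) (h : H) : Set H := G.smul (G.smul F {h}) F

/-- The quotient set `H//F := { h^F | h ∈ H }`. -/
def quotSet (F : Set H) : Set (Set H) := Set.range (G.cls F)

/-- The class `h^F` as an element of `H//F`. -/
def qcls (F : Set H) (h : H) : G.quotSet F := ⟨G.cls F h, h, rfl⟩

/-- The full preimage in `H` of the center of the quotient `H//T`:
`{h | h^T ∈ Z(H//T)}`, i.e. `h^T` commutes with all classes `y^T` and
`(h^T)*(h^T) = {1^T} = {T}`. -/
def qCenterPre (T : Set H) : Set H :=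
  {h | (∀ y : H, G.cls T '' (G.smul (G.smul {h} T) {y}) =
          G.cls T '' (G.smul (G.smul {y} T) {h})) ∧
       G.cls T '' (G.smul (G.smul {G.star h} T) {h}) = {T}}

/-- The upper central series: `Z₀(H) = {1}`, and `Zᵢ₊₁(H)` is the full preimage
of `Z(H//Zᵢ(H))`, i.e. `Zᵢ₊₁(H)//Zᵢ(H) = Z(H//Zᵢ(H))`. -/
def upperCentral : ℕ → Set H
  | 0 => {G.one}
  | n + 1 => G.qCenterPre (upperCentral n)

/-- A hypergroup is weakly nilpotent if `Zₙ(H) = H` for some `n`. -/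
def WeaklyNilpotent : Prop := ∃ n : ℕ, G.upperCentral n = Set.univ

/-- `F` is subnormal in `K` via a chain of successively normal closed subsets. -/
def IsSubnormalIn (F K : Set H) : Prop :=
  ∃ n : ℕ, ∃ C : ℕ → Set H, C 0 = F ∧ C n = K ∧
    ∀ i < n, C i ⊆ C (i + 1) ∧ G.IsClosed (C (i + 1)) ∧ G.IsNormalIn (C i) (C (i + 1))

/-- The quotient `K//N` is thin: `(k^N)*(k^N) = {1^N}` for all `k ∈ K`. -/
def QuotThin (N K : Set H) : Prop :=
  ∀ k ∈ K, G.cls N '' (G.smul (G.smul {G.star k} N) {k}) = {N}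

/-- A residually-thin chain from `{1}` to `K`. -/
def RTChainOn (K : Set H) (n : ℕ) (C : ℕ → Set H) : Prop :=
  C 0 = {G.one} ∧ C n = K ∧
    ∀ i < n, C i ⊆ C (i + 1) ∧ G.IsClosed (C (i + 1)) ∧ G.QuotThin (C i) (C (i + 1))

/-- The valency `n_K = ∏ |Cᵢ₊₁//Cᵢ|` computed along some RT chain for `K`. -/
def HasValencyOn (K : Set H) (m : ℕ) : Prop :=
  ∃ n C, G.RTChainOn K n C ∧
    m = ∏ i ∈ Finset.range n, Nat.card (G.cls (C i) '' C (i + 1))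

/-- A closed `p`-subset: a closed subset whose valency is a power of `p`. -/
def PSubsetOn (p : ℕ) (K : Set H) : Prop :=
  G.IsClosed K ∧ ∃ m k : ℕ, G.HasValencyOn K m ∧ m = p ^ k

/-- `h` is `p`-valenced in `K`: for every subnormal closed `p`-subset `U` of `K`
such that `(h*)^U h^U` consists of thin elements of the quotient,
`n_{(h*)^U h^U} = |(h*)^U h^U|` is a power of `p`. -/
def PValencedElemOn (p : ℕ) (K : Set H) (h : H) : Prop :=
  ∀ U : Set H, G.IsClosed U → U ⊆ K → G.IsSubnormalIn U K → G.PSubsetOn p U →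
    (∀ x ∈ G.smul (G.smul {G.star h} U) {h},
      G.cls U '' (G.smul (G.smul {G.star x} U) {x}) = {U}) →
    ∃ k : ℕ, Nat.card (G.cls U '' (G.smul (G.smul {G.star h} U) {h})) = p ^ k

/-- `K` is `p`-valenced if all its elements are. -/
def PValencedOn (p : ℕ) (K : Set H) : Prop := ∀ h ∈ K, G.PValencedElemOn p K h

end Hypergroup

/-!
Work with complex products of classes `x^Z = ZxZ` inside `H`. Since a set of classes is
determined by its union, `h^Z ∈ Z(H//Z)` means that `h^Z` commutes with every class and
`(h*)^Z h^Z = Z`. In this form the centre of `H//Z` pulls back to a closed subset of `H` (a class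
with an inverse class multiplies classes to single classes), and an element central modulo `Z`
stays central modulo any closed `B ⊇ Z`, because `h^B = B h^Z` and `h^Z` commutes with the
`Z`-saturated set `B`.

For `Q = H//T` let `Pᵢ` be the preimage of `Zᵢ(Q)` under `h ↦ h^T`. It is closed and
`T`-saturated, and the classes of `Q` modulo `Zᵢ(Q)` are the images of the `Pᵢ`-classes, with
matching products. So by induction `Zᵢ(H) ⊆ Pᵢ`: `Zᵢ₊₁(H)` is central modulo `Zᵢ(H)`, hence
modulo `Pᵢ`, hence maps into `Zᵢ₊₁(Q)`.
-/

namespace Hypergroup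

variable {H : Type*} (G : Hypergroup H)

local infixl:70 " ⊙ " => G.smul

lemma mem_hmul_one_self (s : H) : s ∈ G.hmul s G.one := by
  rw [G.hmul_one]; rfl

lemma one_mem_hmul_star_self (s : H) : G.one ∈ G.hmul (G.star s) s :=
  G.inv_left s G.one s (G.mem_hmul_one_self s)

@[simp]
lemma star_star (s : H) : G.star (G.star s) = s := by
  simpa [G.hmul_one, eq_comm] using G.inv_left (G.star s) s G.one (G.one_mem_hmul_star_self s)

@[simp]
lemma star_one : G.star G.one = G.one := by
  simpa [G.hmul_one, eq_comm] using G.one_mem_hmul_star_self G.one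

lemma mem_one_hmul_self (s : H) : s ∈ G.hmul G.one s := by
  simpa using G.inv_right s (G.star s) G.one (by simpa using G.one_mem_hmul_star_self (G.star s))

lemma star_mem_hmul_star {p q r : H} (h : r ∈ G.hmul p q) :
    G.star r ∈ G.hmul (G.star q) (G.star p) :=
  G.inv_right (G.star r) p (G.star q) (G.inv_left r (G.star q) p (G.inv_right p q r h))

lemma mem_smul {A B : Set H} {w : H} : w ∈ A ⊙ B ↔ ∃ a ∈ A, ∃ b ∈ B, w ∈ G.hmul a b := by
  simp [smul]

lemma mem_sstar {A : Set H} {w : H} : w ∈ G.sstar A ↔ G.star w ∈ A :=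
  ⟨by rintro ⟨a, ha, rfl⟩; simpa using ha, fun h => ⟨G.star w, h, G.star_star w⟩⟩

lemma hmul_subset_smul {A B : Set H} {a b : H} (ha : a ∈ A) (hb : b ∈ B) :
    G.hmul a b ⊆ A ⊙ B :=
  fun _ hw => G.mem_smul.2 ⟨a, ha, b, hb, hw⟩

lemma smul_mono {A B A' B' : Set H} (hA : A ⊆ A') (hB : B ⊆ B') : A ⊙ B ⊆ A' ⊙ B' := by
  intro w hw
  obtain ⟨a, ha, b, hb, h⟩ := G.mem_smul.1 hw
  exact G.hmul_subset_smul (hA ha) (hB hb) h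

lemma smul_assoc (A B C : Set H) : A ⊙ B ⊙ C = A ⊙ (B ⊙ C) := by
  ext w
  simp only [mem_smul]
  constructor
  · rintro ⟨u, ⟨a, ha, b, hb, hu⟩, c, hc, hw⟩
    have : w ∈ ⋃ x ∈ G.hmul b c, G.hmul a x := by
      rw [G.assoc]; exact Set.mem_biUnion hu hw
    obtain ⟨x, hx, hwx⟩ := Set.mem_iUnion₂.1 this
    exact ⟨a, ha, x, ⟨b, hb, c, hc, hx⟩, hwx⟩
  · rintro ⟨a, ha, u, ⟨b, hb, c, hc, hu⟩, hw⟩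
    have : w ∈ ⋃ x ∈ G.hmul a b, G.hmul x c := by
      rw [← G.assoc]; exact Set.mem_biUnion hu hw
    obtain ⟨x, hx, hwx⟩ := Set.mem_iUnion₂.1 this
    exact ⟨x, ⟨a, ha, b, hb, hx⟩, c, hc, hwx⟩

lemma smul_biUnion {ι : Type*} (A : Set H) (s : Set ι) (f : ι → Set H) :
    A ⊙ (⋃ i ∈ s, f i) = ⋃ i ∈ s, A ⊙ f i := by
  ext w
  simp only [mem_smul, Set.mem_iUnion, exists_prop]
  aesop

lemma biUnion_smul {ι : Type*} (A : Set H) (s : Set ι) (f : ι → Set H) :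
    (⋃ i ∈ s, f i) ⊙ A = ⋃ i ∈ s, f i ⊙ A := by
  ext w
  simp only [mem_smul, Set.mem_iUnion, exists_prop]
  aesop

lemma smul_singleton_one (A : Set H) : A ⊙ {G.one} = A := by
  ext w
  simp [mem_smul, G.hmul_one]

lemma subset_smul_of_one_mem_right {A B : Set H} (h1 : G.one ∈ B) : A ⊆ A ⊙ B :=
  fun a ha => G.hmul_subset_smul ha h1 (G.mem_hmul_one_self a)

lemma subset_smul_of_one_mem_left {A B : Set H} (h1 : G.one ∈ A) : B ⊆ A ⊙ B :=
  fun b hb => G.hmul_subset_smul h1 hb (G.mem_one_hmul_self b)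

lemma sstar_smul (A B : Set H) : G.sstar (A ⊙ B) = G.sstar B ⊙ G.sstar A := by
  ext w
  simp only [mem_sstar, mem_smul]
  constructor
  · rintro ⟨a, ha, b, hb, h⟩
    exact ⟨G.star b, by simpa using hb, G.star a, by simpa using ha,
      by simpa using G.star_mem_hmul_star h⟩
  · rintro ⟨b, hb, a, ha, h⟩
    exact ⟨G.star a, ha, G.star b, hb, G.star_mem_hmul_star h⟩

@[simp]
lemma sstar_singleton (a : H) : G.sstar {a} = {G.star a} := by
  simp [sstar]

variable {G}

lemma IsClosed.one_mem {Z : Set H} (hZ : G.IsClosed Z) : G.one ∈ Z := by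
  obtain ⟨t, ht⟩ := hZ.1
  exact hZ.2 (G.hmul_subset_smul (G.mem_sstar.2 (by simpa using ht)) ht
    (G.one_mem_hmul_star_self t))

lemma IsClosed.sstar_subset {Z : Set H} (hZ : G.IsClosed Z) : G.sstar Z ⊆ Z :=
  (G.subset_smul_of_one_mem_right hZ.one_mem).trans hZ.2

lemma IsClosed.star_mem {Z : Set H} (hZ : G.IsClosed Z) {t : H} (ht : t ∈ Z) :
    G.star t ∈ Z :=
  hZ.sstar_subset ⟨t, ht, rfl⟩

lemma IsClosed.sstar_eq {Z : Set H} (hZ : G.IsClosed Z) : G.sstar Z = Z :=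
  hZ.sstar_subset.antisymm fun _ ht => G.mem_sstar.2 (hZ.star_mem ht)

lemma IsClosed.smul_self {Z : Set H} (hZ : G.IsClosed Z) : Z ⊙ Z = Z :=
  (hZ.sstar_eq ▸ hZ.2).antisymm (G.subset_smul_of_one_mem_left hZ.one_mem)

lemma IsClosed.smul_smul_self {Z : Set H} (hZ : G.IsClosed Z) (X : Set H) :
    Z ⊙ (Z ⊙ X) = Z ⊙ X := by
  rw [← G.smul_assoc, hZ.smul_self]

lemma IsClosed.smul_eq_self_of_subset_right {Z B : Set H} (hB : G.IsClosed B)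
    (hZ : G.one ∈ Z) (hZB : Z ⊆ B) : B ⊙ Z = B :=
  ((G.smul_mono le_rfl hZB).trans hB.smul_self.le).antisymm
    (G.subset_smul_of_one_mem_right hZ)

lemma IsClosed.smul_eq_self_of_subset_left {Z B : Set H} (hB : G.IsClosed B)
    (hZ : G.one ∈ Z) (hZB : Z ⊆ B) : Z ⊙ B = B :=
  ((G.smul_mono hZB le_rfl).trans hB.smul_self.le).antisymm
    (G.subset_smul_of_one_mem_left hZ)

lemma IsClosed.sandwich_eq_self_of_subset {Z B : Set H} (hB : G.IsClosed B) (hZ : G.one ∈ Z)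
    (hZB : Z ⊆ B) : Z ⊙ B ⊙ Z = B := by
  rw [hB.smul_eq_self_of_subset_left hZ hZB, hB.smul_eq_self_of_subset_right hZ hZB]

lemma IsClosed.sandwich_eq_of_subset {Z B X : Set H} (hB : G.IsClosed B) (hZ : G.one ∈ Z)
    (hZB : Z ⊆ B) (hX : B ⊙ X ⊙ B = X) : Z ⊙ X ⊙ Z = X := by
  rw [← hX]
  calc Z ⊙ (B ⊙ X ⊙ B) ⊙ Z = Z ⊙ B ⊙ X ⊙ (B ⊙ Z) := by simp only [G.smul_assoc]
    _ = B ⊙ X ⊙ B := by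
      rw [hB.smul_eq_self_of_subset_left hZ hZB, hB.smul_eq_self_of_subset_right hZ hZB]

lemma mem_cls_self {Z : Set H} (hZ : G.one ∈ Z) (h : H) : h ∈ G.cls Z h :=
  G.subset_smul_of_one_mem_right hZ (G.subset_smul_of_one_mem_left hZ rfl)

lemma sandwich_eq_biUnion_cls (Z S : Set H) : Z ⊙ S ⊙ Z = ⋃ s ∈ S, G.cls Z s := by
  ext w
  simp only [cls, mem_smul, Set.mem_iUnion, Set.mem_singleton_iff, exists_prop]
  aesop

lemma cls_subset_of_sandwich_eq {Z X : Set H} (hX : Z ⊙ X ⊙ Z = X) {w : H} (hw : w ∈ X) :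
    G.cls Z w ⊆ X := by
  rw [← hX, sandwich_eq_biUnion_cls]
  exact Set.subset_biUnion_of_mem hw

lemma cls_smul_eq_self {Z T : Set H} (h : Z ⊙ T = Z) (a : H) : G.cls Z a ⊙ T = G.cls Z a := by
  rw [cls, G.smul_assoc, h]

lemma IsClosed.smul_cls {Z : Set H} (hZ : G.IsClosed Z) (x : H) :
    Z ⊙ G.cls Z x = G.cls Z x := by
  rw [cls, ← G.smul_assoc, ← G.smul_assoc, hZ.smul_self]

lemma IsClosed.cls_smul {Z : Set H} (hZ : G.IsClosed Z) (x : H) :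
    G.cls Z x ⊙ Z = G.cls Z x :=
  G.cls_smul_eq_self hZ.smul_self x

lemma IsClosed.sandwich_cls {Z : Set H} (hZ : G.IsClosed Z) (x : H) :
    Z ⊙ G.cls Z x ⊙ Z = G.cls Z x := by
  rw [hZ.smul_cls, hZ.cls_smul]

lemma IsClosed.sandwich_cls_smul_cls {Z : Set H} (hZ : G.IsClosed Z) (a b : H) :
    Z ⊙ (G.cls Z a ⊙ G.cls Z b) ⊙ Z = G.cls Z a ⊙ G.cls Z b := by
  rw [← G.smul_assoc, hZ.smul_cls, G.smul_assoc, hZ.cls_smul]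

lemma IsClosed.cls_smul_cls {Z : Set H} (hZ : G.IsClosed Z) (a b : H) :
    G.cls Z a ⊙ G.cls Z b = Z ⊙ ({a} ⊙ Z ⊙ {b}) ⊙ Z := by
  simp only [cls, G.smul_assoc, hZ.smul_smul_self]

lemma IsClosed.mem_cls_comm {Z : Set H} (hZ : G.IsClosed Z) {a b : H}
    (hb : b ∈ G.cls Z a) : a ∈ G.cls Z b := by
  obtain ⟨u, hu, t₂, ht₂, hbu⟩ := G.mem_smul.1 hb
  obtain ⟨t₁, ht₁, a', rfl, hua⟩ := G.mem_smul.1 hu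
  rw [cls, G.smul_assoc]
  exact G.hmul_subset_smul (hZ.star_mem ht₁)
    (G.hmul_subset_smul (Set.mem_singleton b) (hZ.star_mem ht₂) (G.inv_right u t₂ b hbu))
    (G.inv_left t₁ a' u hua)

lemma IsClosed.cls_eq_of_mem {Z : Set H} (hZ : G.IsClosed Z) {a b : H}
    (hb : b ∈ G.cls Z a) : G.cls Z b = G.cls Z a :=
  (G.cls_subset_of_sandwich_eq (hZ.sandwich_cls a) hb).antisymm
    (G.cls_subset_of_sandwich_eq (hZ.sandwich_cls b) (hZ.mem_cls_comm hb))

lemma IsClosed.cls_one {Z : Set H} (hZ : G.IsClosed Z) : G.cls Z G.one = Z := by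
  rw [cls, G.smul_singleton_one, hZ.smul_self]

lemma IsClosed.sstar_cls {Z : Set H} (hZ : G.IsClosed Z) (x : H) :
    G.sstar (G.cls Z x) = G.cls Z (G.star x) := by
  rw [cls, cls, G.sstar_smul, G.sstar_smul, sstar_singleton, hZ.sstar_eq, G.smul_assoc]

lemma IsClosed.image_cls_sandwich {Z : Set H} (hZ : G.IsClosed Z) (S : Set H) :
    G.cls Z '' (Z ⊙ S ⊙ Z) = G.cls Z '' S := by
  refine Set.Subset.antisymm ?_ (Set.image_mono ?_)
  · rintro _ ⟨w, hw, rfl⟩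
    rw [sandwich_eq_biUnion_cls, Set.mem_iUnion₂] at hw
    obtain ⟨s, hs, hws⟩ := hw
    exact ⟨s, hs, (hZ.cls_eq_of_mem hws).symm⟩
  · exact (G.subset_smul_of_one_mem_left hZ.one_mem).trans
      (G.subset_smul_of_one_mem_right hZ.one_mem)

lemma IsClosed.image_cls_eq_iff {Z : Set H} (hZ : G.IsClosed Z) {S S' : Set H} :
    G.cls Z '' S = G.cls Z '' S' ↔ Z ⊙ S ⊙ Z = Z ⊙ S' ⊙ Z := by
  refine ⟨fun h => ?_, fun h => by rw [← hZ.image_cls_sandwich S, h, hZ.image_cls_sandwich]⟩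
  rw [sandwich_eq_biUnion_cls, sandwich_eq_biUnion_cls, ← Set.sUnion_image,
    ← Set.sUnion_image, h]

lemma IsClosed.mem_qCenterPre_iff {Z : Set H} (hZ : G.IsClosed Z) {a : H} :
    a ∈ G.qCenterPre Z ↔
      (∀ y, G.cls Z a ⊙ G.cls Z y = G.cls Z y ⊙ G.cls Z a) ∧
        G.cls Z (G.star a) ⊙ G.cls Z a = Z := by
  have hZ1 : ({Z} : Set (Set H)) = G.cls Z '' {G.one} := by
    rw [Set.image_singleton, hZ.cls_one]
  simp only [qCenterPre, Set.mem_ofPred_eq, hZ1, hZ.image_cls_eq_iff, hZ.cls_smul_cls]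
  rw [G.smul_singleton_one, hZ.smul_self]

lemma IsClosed.cls_smul_cls_eq_cls {Z : Set H} (hZ : G.IsClosed Z) {x y c : H}
    (hx : G.cls Z x ⊙ G.cls Z (G.star x) = Z) (hc : c ∈ G.cls Z x ⊙ G.cls Z y) :
    G.cls Z x ⊙ G.cls Z y = G.cls Z c := by
  refine Set.Subset.antisymm ?_ (G.cls_subset_of_sandwich_eq (hZ.sandwich_cls_smul_cls x y) hc)
  obtain ⟨u, hu, v, hv, hcuv⟩ := G.mem_smul.1 hc
  have hv' : v ∈ G.cls Z (G.star x) ⊙ G.cls Z c :=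
    G.hmul_subset_smul (by rw [← hZ.sstar_cls]; exact G.mem_sstar.2 (by simpa using hu))
      (mem_cls_self hZ.one_mem c) (G.inv_left u v c hcuv)
  have hy : G.cls Z y ⊆ G.cls Z (G.star x) ⊙ G.cls Z c := by
    rw [← hZ.cls_eq_of_mem hv]
    exact G.cls_subset_of_sandwich_eq (hZ.sandwich_cls_smul_cls _ _) hv'
  calc G.cls Z x ⊙ G.cls Z y ⊆ G.cls Z x ⊙ (G.cls Z (G.star x) ⊙ G.cls Z c) :=
        G.smul_mono le_rfl hy
    _ = G.cls Z c := by rw [← G.smul_assoc, hx, hZ.smul_cls]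

lemma IsClosed.cls_star_smul_cls_comm {Z : Set H} (hZ : G.IsClosed Z) {a : H}
    (ha : ∀ y, G.cls Z a ⊙ G.cls Z y = G.cls Z y ⊙ G.cls Z a) (y : H) :
    G.cls Z (G.star a) ⊙ G.cls Z y = G.cls Z y ⊙ G.cls Z (G.star a) := by
  have h := congrArg G.sstar (ha (G.star y))
  simpa only [G.sstar_smul, hZ.sstar_cls, star_star] using h.symm

lemma IsClosed.one_mem_qCenterPre {Z : Set H} (hZ : G.IsClosed Z) : G.one ∈ G.qCenterPre Z := by
  refine hZ.mem_qCenterPre_iff.2 ⟨fun y => ?_, ?_⟩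
  · rw [hZ.cls_one, hZ.smul_cls, hZ.cls_smul]
  · rw [star_one, hZ.cls_one, hZ.smul_self]

lemma IsClosed.isClosed_qCenterPre {Z : Set H} (hZ : G.IsClosed Z) :
    G.IsClosed (G.qCenterPre Z) := by
  refine ⟨⟨G.one, hZ.one_mem_qCenterPre⟩, fun w hw => ?_⟩
  obtain ⟨x, hx, b, hb, hw⟩ := G.mem_smul.1 hw
  obtain ⟨hx_comm, hx_thin⟩ := hZ.mem_qCenterPre_iff.1 (G.mem_sstar.1 hx)
  obtain ⟨hb_comm, hb_thin⟩ := hZ.mem_qCenterPre_iff.1 hb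
  simp only [star_star] at hx_thin
  have hx_comm' := hZ.cls_star_smul_cls_comm hx_comm
  simp only [star_star] at hx_comm'
  have hw_cls : G.cls Z x ⊙ G.cls Z b = G.cls Z w :=
    hZ.cls_smul_cls_eq_cls hx_thin
      (G.hmul_subset_smul (mem_cls_self hZ.one_mem x) (mem_cls_self hZ.one_mem b) hw)
  refine hZ.mem_qCenterPre_iff.2 ⟨fun y => ?_, ?_⟩
  · rw [← hw_cls, G.smul_assoc, hb_comm, ← G.smul_assoc, hx_comm', G.smul_assoc]
  · rw [← hZ.sstar_cls, ← hw_cls, G.sstar_smul, hZ.sstar_cls, hZ.sstar_cls, G.smul_assoc,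
      ← G.smul_assoc (G.cls Z (G.star x)), hx_comm x, hx_thin, hZ.smul_cls, hb_thin]

lemma cls_smul_comm_of_sandwich_eq {Z X : Set H} {a : H}
    (ha : ∀ y, G.cls Z a ⊙ G.cls Z y = G.cls Z y ⊙ G.cls Z a) (hX : Z ⊙ X ⊙ Z = X) :
    G.cls Z a ⊙ X = X ⊙ G.cls Z a := by
  rw [← hX, sandwich_eq_biUnion_cls, G.smul_biUnion, G.biUnion_smul]
  simp only [ha]

lemma IsClosed.cls_eq_smul_cls_of_subset {Z B : Set H} (hZ : G.IsClosed Z) (hB : G.IsClosed B)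
    (hZB : Z ⊆ B) {a : H} (ha : ∀ y, G.cls Z a ⊙ G.cls Z y = G.cls Z y ⊙ G.cls Z a) :
    G.cls B a = B ⊙ G.cls Z a := by
  calc G.cls B a = B ⊙ Z ⊙ {a} ⊙ (Z ⊙ B) := by
        rw [hB.smul_eq_self_of_subset_right hZ.one_mem hZB,
          hB.smul_eq_self_of_subset_left hZ.one_mem hZB]; rfl
    _ = B ⊙ (G.cls Z a ⊙ B) := by simp only [cls, G.smul_assoc]
    _ = B ⊙ G.cls Z a := by
      rw [G.cls_smul_comm_of_sandwich_eq ha (hB.sandwich_eq_self_of_subset hZ.one_mem hZB),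
        ← G.smul_assoc, hB.smul_self]

lemma IsClosed.qCenterPre_mono {Z B : Set H} (hZ : G.IsClosed Z) (hB : G.IsClosed B)
    (hZB : Z ⊆ B) : G.qCenterPre Z ⊆ G.qCenterPre B := by
  intro a ha
  obtain ⟨ha_comm, ha_thin⟩ := hZ.mem_qCenterPre_iff.1 ha
  have hBa := hZ.cls_eq_smul_cls_of_subset hB hZB ha_comm
  have hBa' := hZ.cls_eq_smul_cls_of_subset hB hZB (hZ.cls_star_smul_cls_comm ha_comm)
  refine hB.mem_qCenterPre_iff.2 ⟨fun y => ?_, ?_⟩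
  · have hBy_sat := hB.sandwich_eq_of_subset hZ.one_mem hZB (hB.sandwich_cls y)
    rw [hBa, G.smul_assoc, G.cls_smul_comm_of_sandwich_eq ha_comm hBy_sat, ← G.smul_assoc,
      hB.smul_cls, ← G.smul_assoc, hB.cls_smul]
  · rw [hBa', hBa, ← G.cls_smul_comm_of_sandwich_eq ha_comm
      (hB.sandwich_eq_self_of_subset hZ.one_mem hZB), G.smul_assoc,
      ← G.smul_assoc (G.cls Z _), ha_thin, hB.smul_eq_self_of_subset_left hZ.one_mem hZB,
      hB.smul_self]

variable (G) in
lemma isClosed_upperCentral (n : ℕ) : G.IsClosed (G.upperCentral n) := by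
  induction n with
  | zero =>
    refine ⟨Set.singleton_nonempty _, ?_⟩
    rw [upperCentral, sstar_singleton, star_one, G.smul_singleton_one]
  | succ n ih => exact ih.isClosed_qCenterPre

section Quotient

variable {T : Set H} {Q : Hypergroup (G.quotSet T)}

local notation "φ" => G.qcls T

variable (G T Q) in
def IsQuotientHmul : Prop :=
  ∀ a b : H, Q.hmul (φ a) (φ b) = {x : G.quotSet T | ∃ y ∈ {a} ⊙ T ⊙ {b}, x = φ y}

variable (G T) in
lemma qcls_surjective : Function.Surjective (G.qcls T) := by
  rintro ⟨_, h, rfl⟩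
  exact ⟨h, rfl⟩

lemma qcls_eq_of_mem_cls (hT : G.IsClosed T) {h w : H} (hw : w ∈ G.cls T h) : φ w = φ h :=
  Subtype.ext (hT.cls_eq_of_mem hw)

lemma image_qcls_smul (hmul : G.IsQuotientHmul T Q) (X Y : Set H) :
    Q.smul (φ '' X) (φ '' Y) = φ '' (X ⊙ T ⊙ Y) := by
  ext q
  simp only [Q.mem_smul, G.mem_smul, Set.mem_image]
  constructor
  · rintro ⟨_, ⟨x, hx, rfl⟩, _, ⟨y, hy, rfl⟩, hq⟩
    rw [hmul] at hq
    obtain ⟨w, hw, rfl⟩ := hq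
    obtain ⟨u, hu, _, hy', hw⟩ := G.mem_smul.1 hw
    obtain ⟨_, hx', t, ht, hu⟩ := G.mem_smul.1 hu
    rw [Set.mem_singleton_iff.1 hx'] at hu
    rw [Set.mem_singleton_iff.1 hy'] at hw
    exact ⟨w, ⟨u, ⟨x, hx, t, ht, hu⟩, y, hy, hw⟩, rfl⟩
  · rintro ⟨w, ⟨u, ⟨x, hx, t, ht, hu⟩, y, hy, hw⟩, rfl⟩
    refine ⟨φ x, ⟨x, hx, rfl⟩, φ y, ⟨y, hy, rfl⟩, ?_⟩
    rw [hmul]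
    exact ⟨w, G.hmul_subset_smul (G.hmul_subset_smul (Set.mem_singleton x) ht hu)
      (Set.mem_singleton y) hw, rfl⟩

lemma image_qcls_sstar (hstar : ∀ h : H, Q.star (φ h) = φ (G.star h)) (X : Set H) :
    Q.sstar (φ '' X) = φ '' G.sstar X := by
  simp only [sstar, Set.image_image, hstar]

lemma smul_preimage_qcls (hT : G.IsClosed T) (W : Set (G.quotSet T)) :
    T ⊙ (φ ⁻¹' W) = φ ⁻¹' W := by
  refine Set.Subset.antisymm (fun w hw => ?_) (G.subset_smul_of_one_mem_left hT.one_mem)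
  obtain ⟨t, ht, p, hp, hw⟩ := G.mem_smul.1 hw
  have hw' : w ∈ G.cls T p := G.subset_smul_of_one_mem_right hT.one_mem
    (G.hmul_subset_smul ht (Set.mem_singleton p) hw)
  rwa [Set.mem_preimage, qcls_eq_of_mem_cls hT hw']

lemma preimage_qcls_smul (hT : G.IsClosed T) (W : Set (G.quotSet T)) :
    (φ ⁻¹' W) ⊙ T = φ ⁻¹' W := by
  refine Set.Subset.antisymm (fun w hw => ?_) (G.subset_smul_of_one_mem_right hT.one_mem)
  obtain ⟨p, hp, t, ht, hw⟩ := G.mem_smul.1 hw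
  have hw' : w ∈ G.cls T p := G.hmul_subset_smul
    (G.subset_smul_of_one_mem_left hT.one_mem (Set.mem_singleton p)) ht hw
  rwa [Set.mem_preimage, qcls_eq_of_mem_cls hT hw']

lemma isClosed_preimage_qcls (hT : G.IsClosed T) (hmul : G.IsQuotientHmul T Q)
    (hstar : ∀ h : H, Q.star (φ h) = φ (G.star h)) {W : Set (G.quotSet T)}
    (hW : Q.IsClosed W) : G.IsClosed (φ ⁻¹' W) := by
  refine ⟨hW.1.preimage (qcls_surjective G T), fun w hw => hW.2 ?_⟩
  rw [← Set.image_preimage_eq W (qcls_surjective G T), image_qcls_sstar hstar,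
    image_qcls_smul hmul]
  exact Set.mem_image_of_mem _
    (G.smul_mono (G.subset_smul_of_one_mem_right hT.one_mem) le_rfl hw)

lemma cls_qcls (hT : G.IsClosed T) (hmul : G.IsQuotientHmul T Q) (W : Set (G.quotSet T))
    (z : H) : Q.cls W (φ z) = φ '' G.cls (φ ⁻¹' W) z := by
  calc Q.cls W (φ z) = Q.smul (Q.smul (φ '' (φ ⁻¹' W)) (φ '' {z})) (φ '' (φ ⁻¹' W)) := by
        rw [Set.image_preimage_eq W (qcls_surjective G T), Set.image_singleton]; rfl
    _ = φ '' ((φ ⁻¹' W) ⊙ T ⊙ {z} ⊙ T ⊙ (φ ⁻¹' W)) := by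
        rw [image_qcls_smul hmul, image_qcls_smul hmul]
    _ = φ '' G.cls (φ ⁻¹' W) z := by
        rw [preimage_qcls_smul hT, G.smul_assoc (_ ⊙ {z}), smul_preimage_qcls hT]; rfl

lemma cls_qcls_smul_cls_qcls (hT : G.IsClosed T) (hmul : G.IsQuotientHmul T Q)
    (W : Set (G.quotSet T)) (a b : H) :
    Q.smul (Q.cls W (φ a)) (Q.cls W (φ b)) =
      φ '' (G.cls (φ ⁻¹' W) a ⊙ G.cls (φ ⁻¹' W) b) := by
  rw [cls_qcls hT hmul, cls_qcls hT hmul, image_qcls_smul hmul,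
    G.cls_smul_eq_self (preimage_qcls_smul hT W)]

lemma qcls_mem_qCenterPre (hT : G.IsClosed T) (hmul : G.IsQuotientHmul T Q)
    (hstar : ∀ h : H, Q.star (φ h) = φ (G.star h)) {W : Set (G.quotSet T)}
    (hW : Q.IsClosed W) {h : H} (hh : h ∈ G.qCenterPre (φ ⁻¹' W)) :
    φ h ∈ Q.qCenterPre W := by
  obtain ⟨hh_comm, hh_thin⟩ :=
    (isClosed_preimage_qcls hT hmul hstar hW).mem_qCenterPre_iff.1 hh
  refine hW.mem_qCenterPre_iff.2 ⟨fun y => ?_, ?_⟩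
  · obtain ⟨y, rfl⟩ := qcls_surjective G T y
    rw [cls_qcls_smul_cls_qcls hT hmul, cls_qcls_smul_cls_qcls hT hmul, hh_comm]
  · rw [hstar, cls_qcls_smul_cls_qcls hT hmul, hh_thin,
      Set.image_preimage_eq W (qcls_surjective G T)]

lemma upperCentral_subset_preimage_qcls (hT : G.IsClosed T) (hmul : G.IsQuotientHmul T Q)
    (hone : Q.one = φ G.one) (hstar : ∀ h : H, Q.star (φ h) = φ (G.star h)) (n : ℕ) :
    G.upperCentral n ⊆ φ ⁻¹' Q.upperCentral n := by
  induction n with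
  | zero => simp [upperCentral, hone]
  | succ n ih =>
    have hP := isClosed_preimage_qcls hT hmul hstar (Q.isClosed_upperCentral n)
    exact fun h hh => qcls_mem_qCenterPre hT hmul hstar (Q.isClosed_upperCentral n)
      ((G.isClosed_upperCentral n).qCenterPre_mono hP ih hh)

end Quotient

end Hypergroup

/-- if `H` is weakly nilpotent and `T` is closed, then the
quotient hypergroup `H//T` is weakly nilpotent. -/
theorem quotient_weaklyNilpotent {H : Type*} (G : Hypergroup H) (T : Set H)
    (hT : G.IsClosed T) (Q : Hypergroup (G.quotSet T))
    (hmul : ∀ a b : H, Q.hmul (G.qcls T a) (G.qcls T b) =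
      {x : G.quotSet T | ∃ y ∈ G.smul (G.smul {a} T) {b}, x = G.qcls T y})
    (hone : Q.one = G.qcls T G.one)
    (hstar : ∀ h : H, Q.star (G.qcls T h) = G.qcls T (G.star h))
    (hG : G.WeaklyNilpotent) :
    Q.WeaklyNilpotent := by
  obtain ⟨n, hn⟩ := hG
  refine ⟨n, Set.eq_univ_of_forall fun q => ?_⟩
  obtain ⟨h, rfl⟩ := Hypergroup.qcls_surjective G T q
  exact Hypergroup.upperCentral_subset_preimage_qcls hT hmul hone hstar n (hn ▸ Set.mem_univ h)
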